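/- arXiv:2309.05902 — 4 statements merged into one kernel-verified Lean document; each statement's English description precedes it below -/
import Mathlib

section
/- For every natural number n ≥ 1, in the standard Game of Cycles, the line sub-game of type 4 — a path of n unmarked edges with pre-marked directed edges attached at both ends, both pointing in the same direction along the path (•→•—•⋯•—•→•) — has Grundy value 0 if n is even and 1 if n is odd. -/
/-- Edge state on a path/cycle: `none` = unmarked, `some true` = directed "rightwards"
(from vertex `i` to vertex `i+1`), `some false` = directed "leftwards". -/
abbrev EdgeState := Option Bool

/-- Minimum excludant of a set of naturals: the least natural number not in the set. -/
noncomputable def mex (S : Set ℕ) : ℕ := sInf {n | n ∉ S}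

/-- Generic fueled Grundy value of an impartial game with move function `moves`
(the fuel always dominates the number of remaining moves in our uses, so this
computes the Sprague–Grundy value). -/
noncomputable def grundyAux {α : Type} (moves : α → Set α) : ℕ → α → ℕ
  | 0, _ => 0
  | k+1, x => mex ((grundyAux moves k) '' (moves x))

/-- A line position (list of edge states, vertex `j+1` lying between edges `j` and
`j+1`) is admissible: no non-exempt vertex is a sink (all incident edges marked and
directed toward it) and, unless `sourceAllowed`, no non-exempt vertex is a source
(all incident edges marked and directed away from it).  The left endpoint (vertex
`0`) is exempt iff `exL`, the right endpoint iff `exR`. -/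
def LineOK (sourceAllowed exL exR : Bool) (es : List EdgeState) : Prop :=
  (∀ j, ¬ (es[j]? = some (some true) ∧ es[j+1]? = some (some false))) ∧
  (sourceAllowed = true ∨
    ∀ j, ¬ (es[j]? = some (some false) ∧ es[j+1]? = some (some true))) ∧
  (exL = true ∨ (es.head? ≠ some (some false) ∧
    (sourceAllowed = true ∨ es.head? ≠ some (some true)))) ∧
  (exR = true ∨ (es.getLast? ≠ some (some true) ∧
    (sourceAllowed = true ∨ es.getLast? ≠ some (some false))))

/-- A legal move on a line position marks an unmarked edge with one of the two
directions so that the resulting position is admissible. -/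
def lineMoves (sourceAllowed exL exR : Bool) (es : List EdgeState) :
    Set (List EdgeState) :=
  { es' | ∃ j d, es[j]? = some none ∧ es' = es.set j (some d) ∧
      LineOK sourceAllowed exL exR es' }

/-- Grundy value (Nimber) of the line (sub-)game with `n` unmarked edges.
`l` (resp. `r`) is an optional pre-marked directed edge attached at the left
(resp. right) end of the path (`some true` pointing rightwards, `some false`
pointing leftwards); the outer endpoint of a pre-marked edge is exempt from the
no-sink (and, when sources are disallowed, no-source) restriction.
`sourceAllowed = false` gives the standard Game of Cycles, `sourceAllowed = true`
gives Cycles with Sources. -/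
noncomputable def lineNim (sourceAllowed : Bool) (l r : Option Bool) (n : ℕ) : ℕ :=
  let es : List EdgeState :=
    (l.map some).toList ++ List.replicate n none ++ (r.map some).toList
  grundyAux (lineMoves sourceAllowed l.isSome r.isSome) es.length es

/-!
With both outer endpoints exempt, a line position is legal exactly when no two adjacent edges
point in opposite directions, and every move fills exactly one blank. In a legal position whose
two end edges point the same way, an odd number of blanks always leaves a legal move: a blank
next to another blank, or between two edges of equal direction, can be filled; if no blank is
of that kind, the direction flips once at each blank and an odd number of flips could not
return to the starting direction. So every position with an odd number of blanks has a move,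
and by induction the Grundy value is the parity of the number of blanks.
-/

lemma mex_eq_zero {S : Set ℕ} (h : 0 ∉ S) : mex S = 0 :=
  Nat.eq_zero_of_le_zero (Nat.sInf_le h)

lemma mex_singleton_zero : mex {0} = 1 := by
  simp only [mex, Set.mem_singleton_iff]
  exact le_antisymm (Nat.sInf_le one_ne_zero) (Nat.one_le_iff_ne_zero.mpr
    (Nat.sInf_mem (s := {n | n ≠ 0}) ⟨1, one_ne_zero⟩))

theorem grundyAux_eq_mod_two {α : Type} {moves : α → Set α} (P : α → Prop) (f : α → ℕ)
    (hmove : ∀ x, P x → ∀ y ∈ moves x, P y ∧ f y + 1 = f x)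
    (hodd : ∀ x, P x → Odd (f x) → (moves x).Nonempty) :
    ∀ k x, P x → f x ≤ k → grundyAux moves k x = f x % 2 := by
  intro k
  induction k with
  | zero => intro x _ hk; simp [grundyAux, Nat.le_zero.mp hk]
  | succ k ih =>
    intro x hx hk
    have hval : ∀ y ∈ moves x, grundyAux moves k y = (f x + 1) % 2 := by
      intro y hy
      obtain ⟨hy, hfy⟩ := hmove x hx y hy
      rw [ih y hy (by omega)]
      omega
    rw [grundyAux]
    rcases Nat.mod_two_eq_zero_or_one (f x) with he | ho
    · rw [he]
      refine mex_eq_zero ?_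
      rintro ⟨y, hy, h0⟩
      rw [hval y hy] at h0
      omega
    · have himage : grundyAux moves k '' moves x = {0} :=
        Set.eq_singleton_iff_nonempty_unique_mem.mpr ⟨(hodd x hx (Nat.odd_iff.mpr ho)).image _, by
          rintro _ ⟨y, hy, rfl⟩
          rw [hval y hy]
          omega⟩
      rw [himage, mex_singleton_zero, ho]

lemma List.isChain_iff_getElem? {α : Type*} {R : α → α → Prop} {l : List α} :
    l.IsChain R ↔ ∀ j x y, l[j]? = some x → l[j + 1]? = some y → R x y := by
  rw [List.isChain_iff_getElem]
  constructor
  · intro h j x y hx hy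
    obtain ⟨hj, rfl⟩ := List.getElem?_eq_some_iff.mp hx
    obtain ⟨hj', rfl⟩ := List.getElem?_eq_some_iff.mp hy
    exact h j hj'
  · intro h j hj
    exact h j _ _ (List.getElem?_eq_getElem (by omega)) (List.getElem?_eq_getElem hj)

namespace LineGame

def Compatible (x y : EdgeState) : Prop := x = none ∨ y = none ∨ x = y

lemma compatible_iff (x y : EdgeState) : Compatible x y ↔
    ¬(x = some true ∧ y = some false) ∧ ¬(x = some false ∧ y = some true) := by
  rcases x with _ | _ | _ <;> rcases y with _ | _ | _ <;> simp [Compatible]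

lemma lineOK_iff_isChain (es : List EdgeState) :
    LineOK false true true es ↔ es.IsChain Compatible := by
  simp only [LineOK, List.isChain_iff_getElem?, compatible_iff, Bool.false_eq_true, false_or,
    true_or, and_true]
  constructor
  · rintro ⟨hsink, hsource⟩ j x y hx hy
    exact ⟨fun ⟨hx', hy'⟩ => hsink j ⟨hx ▸ hx' ▸ rfl, hy ▸ hy' ▸ rfl⟩,
      fun ⟨hx', hy'⟩ => hsource j ⟨hx ▸ hx' ▸ rfl, hy ▸ hy' ▸ rfl⟩⟩
  · intro h
    exact ⟨fun j ⟨hx, hy⟩ => (h j _ _ hx hy).1 ⟨rfl, rfl⟩,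
      fun j ⟨hx, hy⟩ => (h j _ _ hx hy).2 ⟨rfl, rfl⟩⟩

lemma eq_not_of_not_compatible {a : Bool} {z : EdgeState} (h : ¬Compatible (some a) z) :
    z = some (!a) := by
  rcases z with _ | c
  · simp [Compatible] at h
  · cases a <;> cases c <;> simp_all [Compatible]

theorem exists_compatible_move (b : Bool) : ∀ (a : Bool) (es : List EdgeState),
    (some a :: es).IsChain Compatible → (some a :: es).getLast? = some (some b) →
    ¬(Even (es.count none) ↔ a = b) →
    ∃ j d, (some a :: es)[j]? = some none ∧ ((some a :: es).set j (some d)).IsChain Compatible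
  | a, [], _, hlast, hpar => by simp_all
  | a, [none], _, hlast, _ => by simp at hlast
  | a, some c :: t, hchain, hlast, hpar => by
    obtain ⟨hac, htail⟩ := List.isChain_cons_cons.mp hchain
    obtain rfl : c = a := by simpa [Compatible, eq_comm] using hac
    obtain ⟨_ | j, d, hj, hmove⟩ := exists_compatible_move b c t htail
      (by rwa [List.getLast?_cons_cons] at hlast) (by simpa using hpar)
    · simp at hj
    · exact ⟨j + 2, d, by simpa using hj, by simpa [Compatible] using hmove⟩
  | a, none :: z :: t, hchain, hlast, hpar => by
    have htail : (z :: t).IsChain Compatible := hchain.tail.tail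
    by_cases hz : Compatible (some a) z
    · exact ⟨1, a, rfl, List.isChain_cons_cons.mpr ⟨Or.inr (Or.inr rfl),
        List.isChain_cons_cons.mpr ⟨hz, htail⟩⟩⟩
    obtain rfl := eq_not_of_not_compatible hz
    obtain ⟨j, d, hj, hmove⟩ := exists_compatible_move b (!a) t htail
      (by rwa [List.getLast?_cons_cons, List.getLast?_cons_cons] at hlast)
      (by cases a <;> cases b <;> simp_all [Nat.even_add_one])
    exact ⟨j + 2, d, by simpa using hj, List.isChain_cons_cons.mpr ⟨Or.inr (Or.inl rfl),
      List.isChain_cons.mpr ⟨fun _ _ => Or.inl rfl, hmove⟩⟩⟩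

def Framed (a : Bool) (es : List EdgeState) : Prop :=
  es.IsChain Compatible ∧ es.head? = some (some a) ∧ es.getLast? = some (some a)

lemma framed_some_replicate_none_some (a : Bool) (n : ℕ) :
    Framed a (some a :: (List.replicate n none ++ [some a])) := by
  refine ⟨?_, rfl, by simp [List.getLast?_cons]⟩
  rw [← List.cons_append, List.isChain_append]
  refine ⟨?_, .singleton _, ?_⟩
  · rw [List.isChain_cons]
    exact ⟨fun _ hy => Or.inr (Or.inl (List.eq_of_mem_replicate (List.mem_of_mem_head? hy))),
      List.isChain_replicate_of_rel n (Or.inl rfl)⟩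
  · cases n <;> simp [Compatible, List.getLast?_cons, List.replicate_succ']

namespace Framed

variable {a : Bool} {es : List EdgeState}

lemma of_mem_lineMoves (h : Framed a es) {es' : List EdgeState}
    (hmove : es' ∈ lineMoves false true true es) :
    Framed a es' ∧ es'.count none + 1 = es.count none := by
  obtain ⟨-, hhead, hlast⟩ := h
  obtain ⟨j, d, hj, rfl, hok⟩ := hmove
  obtain ⟨hjlen, hget⟩ := List.getElem?_eq_some_iff.mp hj
  have hj0 : j ≠ 0 := by
    rintro rfl
    simp [← List.head?_eq_getElem?, hhead] at hj
  have hjlast : j ≠ es.length - 1 := by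
    rintro rfl
    simp [← List.getLast?_eq_getElem?, hlast] at hj
  refine ⟨⟨(lineOK_iff_isChain _).mp hok, ?_, ?_⟩, ?_⟩
  · rwa [List.head?_eq_getElem?, List.getElem?_set_ne hj0, ← List.head?_eq_getElem?]
  · rwa [List.getLast?_eq_getElem?, List.length_set, List.getElem?_set_ne hjlast,
      ← List.getLast?_eq_getElem?]
  · have hpos : 0 < es.count none := List.count_pos_iff.mpr (hget ▸ List.getElem_mem hjlen)
    rw [List.count_set hjlen, hget]
    simp only [BEq.rfl, ↓reduceIte, Option.beq_none, Option.isNone_some, Bool.false_eq_true,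
      add_zero]
    omega

lemma lineMoves_nonempty (h : Framed a es) (hodd : Odd (es.count none)) :
    (lineMoves false true true es).Nonempty := by
  obtain ⟨hchain, hhead, hlast⟩ := h
  obtain ⟨t, rfl⟩ : ∃ t, es = some a :: t := by
    cases es <;> simp_all
  obtain ⟨j, d, hj, hmove⟩ := exists_compatible_move a a t hchain hlast
    (by simpa [Nat.not_even_iff_odd] using hodd)
  exact ⟨_, j, d, hj, rfl, (lineOK_iff_isChain _).mpr hmove⟩

theorem grundyAux_eq (h : Framed a es) {k : ℕ} (hk : es.count none ≤ k) :
    grundyAux (lineMoves false true true) k es = es.count none % 2 :=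
  grundyAux_eq_mod_two (Framed a) (·.count none) (fun _ h _ => h.of_mem_lineMoves)
    (fun _ h => h.lineMoves_nonempty) k es h hk

end Framed

end LineGame

theorem line_type4_nimber_standard_general (n : ℕ) :
    lineNim false (some true) (some true) n = if Even n then 0 else 1 := by
  simp only [lineNim, Option.map_some, Option.toList_some, Option.isSome_some,
    List.cons_append, List.nil_append]
  rw [(LineGame.framed_some_replicate_none_some true n).grundyAux_eq (by simp; omega)]
  simp [Nat.even_iff]
  split_ifs <;> omega

/-- For every `n ≥ 1`, the type-4 line sub-game of the standard
Game of Cycles (pre-marked edges at both ends pointing in the same direction along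
the path, •→•—•⋯•—•→•) has Grundy value `0` if `n` is even and `1` if `n` is odd. -/
theorem line_type4_nimber_standard (n : ℕ) (hn : 1 ≤ n) :
    lineNim false (some true) (some true) n = if Even n then 0 else 1 :=
  line_type4_nimber_standard_general n
end

section
/- In Cycles with Sources played on a path graph with n unmarked edges, the Grundy value for n = 1, 2, …, 18 is given in order by the sequence 0, 1, 0, 1, 0, 3, 2, 0, 2, 3, 0, 1, 0, 1, 0, 5, 7, 0; and for every n ≥ 19 the Grundy value equals the entry in position ((n − 19) mod 17) of the 17-term sequence 1, 0, 1, 0, 3, 2, 4, 5, 3, 0, 1, 0, 1, 0, 5, 7, 8 (indexed from 0). In particular, the Grundy values are eventually periodic with period 17. -/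
/-!
Marked edges cut a position into independent segments of unmarked edges, each bounded by two
marked edges (for the outer segments, a phantom edge pointing into the path, so that an endpoint
may not become a sink). The position is therefore a disjoint sum, and its nimber is the XOR of
the values of its segments. A segment's value depends only on its length `n` and the directions
`a`, `b` of its bounding edges; a move in it leaves two segments of lengths `j` and `k` with
`j + 1 + k = n`. These values are given in closed form, eventually periodic with period `17`
from length `27` on, and checked to satisfy the mex recursion: by computation below length `88`,
and above it because both the values and the option sets are invariant under `n ↦ n + 17`.
-/

def IsMex (S : Set ℕ) (g : ℕ) : Prop := g ∉ S ∧ ∀ m < g, m ∈ S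

theorem IsMex.mex_eq {S : Set ℕ} {g : ℕ} (h : IsMex S g) : mex S = g :=
  le_antisymm (Nat.sInf_le h.1)
    (not_lt.mp fun hlt => Nat.sInf_mem (s := {n | n ∉ S}) ⟨g, h.1⟩ (h.2 _ hlt))

theorem IsMex.xor {S T : Set ℕ} {g h : ℕ} (hS : IsMex S g) (hT : IsMex T h) :
    IsMex ((· ^^^ h) '' S ∪ (g ^^^ ·) '' T) (g ^^^ h) := by
  refine ⟨?_, fun m hm => ?_⟩
  · rintro (⟨s, hs, hsg⟩ | ⟨t, ht, htg⟩)
    · exact hS.1 (by rwa [Nat.xor_left_inj.mp hsg] at hs)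
    · exact hT.1 (by rwa [Nat.xor_right_inj.mp htg] at ht)
  · rcases Nat.lt_xor_cases hm with hlt | hlt
    · exact Or.inl ⟨m ^^^ h, hS.2 _ hlt, by simp⟩
    · exact Or.inr ⟨m ^^^ g, hT.2 _ hlt, by simp⟩

theorem grundyAux_eq_of_isMex {α : Type} {moves : α → Set α} {P : α → Prop} (v rank : α → ℕ)
    (hmex : ∀ x, P x → IsMex (v '' moves x) (v x))
    (hmoves : ∀ x, P x → ∀ y ∈ moves x, P y ∧ rank y < rank x) :
    ∀ fuel x, P x → rank x ≤ fuel → grundyAux moves fuel x = v x := by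
  intro fuel
  induction fuel with
  | zero =>
    intro x hx hrank
    have hnone : moves x = ∅ :=
      Set.eq_empty_of_forall_notMem fun y hy => by have := (hmoves x hx y hy).2; omega
    have := (hmex x hx).2 0
    simp only [hnone, Set.image_empty, Set.mem_empty_iff_false, imp_false, not_lt] at this
    simp [grundyAux, Nat.le_zero.mp this]
  | succ fuel ih =>
    intro x hx hrank
    rw [grundyAux, ← (hmex x hx).mex_eq]
    refine congrArg mex (Set.image_congr fun y hy => ih y (hmoves x hx y hy).1 ?_)
    have := (hmoves x hx y hy).2
    omega

def periodicExt (pre per : List ℕ) (n : ℕ) : ℕ :=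
  if n < pre.length then pre.getD n 0 else per.getD ((n - pre.length) % per.length) 0

theorem periodicExt_add_length {pre per : List ℕ} {n : ℕ} (h : pre.length ≤ n) :
    periodicExt pre per (n + per.length) = periodicExt pre per n := by
  have : n + per.length - pre.length = n - pre.length + per.length := by omega
  simp [periodicExt, this, show ¬ n < pre.length by omega,
    show ¬ n + per.length < pre.length by omega]

/-- The nimber of `n` unmarked edges between marked edges of directions `a` (left) and `b`
(right), `true` meaning rightwards. -/
def segNim : Bool → Bool → ℕ → ℕ
  | true, false => periodicExt [0,0,1,0,1,0,3,2,0,2,3,0,1,0,1,0,5,7,0]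
      [1,0,1,0,3,2,4,5,3,0,1,0,1,0,5,7,8]
  | false, true => periodicExt [0,1,0,1,0,3,2,0,2,3,0,1,0,1,0,5,7,0]
      [1,0,1,0,3,2,4,5,3,0,1,0,1,0,5,7,8]
  | false, false | true, true =>
    periodicExt [0,1,2,3,1,3,2,4,5,2,3,1,3,2,1,4,2,4,1,2,3,1,3,2,4,5,2]
      [3,1,3,2,1,4,3,4,1,2,3,1,3,2,4,5,9]

theorem segNim_add_period {n : ℕ} (h : 27 ≤ n) (a b : Bool) :
    segNim a b (n + 17) = segNim a b n := by
  cases a <;> cases b <;> simp only [segNim] <;>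
    exact periodicExt_add_length (le_trans (by decide) h)

/-- Directing as `d` the edge of such a segment that has `j` unmarked edges to its left and `k`
to its right creates no sink. -/
def SegMoveOK (a : Bool) (j : ℕ) (d : Bool) (k : ℕ) (b : Bool) : Prop :=
  (j = 0 → a = true → d = true) ∧ (k = 0 → d = true → b = true)

instance (a : Bool) (j : ℕ) (d : Bool) (k : ℕ) (b : Bool) : Decidable (SegMoveOK a j d k b) :=
  inferInstanceAs (Decidable (_ ∧ _))

def segOptions (a b : Bool) (n : ℕ) : List ℕ :=
  (List.range n).flatMap fun j =>
    ([false, true].filter fun d => decide (SegMoveOK a j d (n - 1 - j) b)).map fun d =>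
      segNim a d j ^^^ segNim d b (n - 1 - j)

theorem mem_segOptions {a b : Bool} {n x : ℕ} :
    x ∈ segOptions a b n ↔
      ∃ j k d, j + 1 + k = n ∧ SegMoveOK a j d k b ∧ segNim a d j ^^^ segNim d b k = x := by
  simp only [segOptions, List.mem_flatMap, List.mem_range, List.mem_map, List.mem_filter,
    decide_eq_true_eq]
  constructor
  · rintro ⟨j, hj, d, ⟨-, hok⟩, rfl⟩
    exact ⟨j, n - 1 - j, d, by omega, hok, rfl⟩
  · rintro ⟨j, k, d, rfl, hok, rfl⟩
    refine ⟨j, by omega, d, ?_⟩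
    rw [show j + 1 + k - 1 - j = k by omega]
    exact ⟨⟨by simp, hok⟩, rfl⟩

/-- Of the two pieces left by a move, one is long enough to stay in the periodic range of
`segNim` when shifted by `17`. -/
theorem mem_segOptions_add_period {a b : Bool} {n x : ℕ} (h : 71 ≤ n) :
    x ∈ segOptions a b (n + 17) ↔ x ∈ segOptions a b n := by
  simp only [mem_segOptions, SegMoveOK]
  constructor
  · rintro ⟨j, k, d, hjk, hok, rfl⟩
    by_cases hk : 44 ≤ k
    · refine ⟨j, k - 17, d, by omega, ⟨hok.1, by omega⟩, ?_⟩
      rw [← segNim_add_period (n := k - 17) (by omega), Nat.sub_add_cancel (by omega)]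
    · refine ⟨j - 17, k, d, by omega, ⟨by omega, hok.2⟩, ?_⟩
      rw [← segNim_add_period (n := j - 17) (by omega), Nat.sub_add_cancel (by omega)]
  · rintro ⟨j, k, d, hjk, hok, rfl⟩
    by_cases hk : 27 ≤ k
    · exact ⟨j, k + 17, d, by omega, ⟨hok.1, by omega⟩, by rw [segNim_add_period hk]⟩
    · exact ⟨j + 17, k, d, by omega, ⟨by omega, hok.2⟩,
        by rw [segNim_add_period (by omega)]⟩

theorem isMex_segOptions_of_lt : ∀ n < 88, ∀ a b,
    segNim a b n ∉ segOptions a b n ∧ ∀ m < segNim a b n, m ∈ segOptions a b n := by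
  decide +kernel

theorem isMex_segOptions (a b : Bool) (n : ℕ) :
    IsMex {x | x ∈ segOptions a b n} (segNim a b n) := by
  induction n using Nat.strong_induction_on generalizing a b with
  | _ n ih =>
    by_cases hn : n < 88
    · exact isMex_segOptions_of_lt n hn a b
    · obtain ⟨m, rfl⟩ : ∃ m, n = m + 17 := ⟨n - 17, by omega⟩
      rw [segNim_add_period (by omega)]
      convert ih m (by omega) a b using 2
      ext x
      exact mem_segOptions_add_period (by omega)

def NoSinkBetween (x y : EdgeState) : Prop := ¬(x = some true ∧ y = some false)

def LegalBetween (a : Bool) (es : List EdgeState) (b : Bool) : Prop :=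
  List.IsChain NoSinkBetween (some a :: (es ++ [some b]))

def movesBetween (a : Bool) (es : List EdgeState) (b : Bool) : Set (List EdgeState) :=
  {es' | ∃ u d v, es = u ++ none :: v ∧ es' = u ++ some d :: v ∧ LegalBetween a es' b}

/-- The nimber of `k` unmarked edges followed by `es`, between marked edges `a` and `b`. -/
def posNim : Bool → ℕ → List EdgeState → Bool → ℕ
  | a, k, [], b => segNim a b k
  | a, k, none :: t, b => posNim a (k + 1) t b
  | a, k, some d :: t, b => segNim a d k ^^^ posNim d 0 t b

theorem posNim_replicate_append (m : ℕ) (a : Bool) (k : ℕ) (es : List EdgeState) (b : Bool) :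
    posNim a k (List.replicate m none ++ es) b = posNim a (k + m) es b := by
  induction m generalizing k with
  | zero => rfl
  | succ m ih => rw [List.replicate_succ, List.cons_append, posNim, ih]; ring_nf

theorem posNim_replicate (m : ℕ) (a : Bool) (k : ℕ) (b : Bool) :
    posNim a k (List.replicate m none) b = segNim a b (k + m) := by
  rw [← List.append_nil (List.replicate m none), posNim_replicate_append]
  rfl

theorem posNim_append_some (u : List EdgeState) (a : Bool) (k : ℕ) (d : Bool)
    (v : List EdgeState) (b : Bool) :
    posNim a k (u ++ some d :: v) b = posNim a k u d ^^^ posNim d 0 v b := by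
  induction u generalizing a k with
  | nil => rfl
  | cons x u ih =>
    cases x with
    | none => exact ih a (k + 1)
    | some e => rw [List.cons_append, posNim, posNim, ih, Nat.xor_assoc]

theorem legalBetween_append_some {a c b : Bool} {u v : List EdgeState} :
    LegalBetween a (u ++ some c :: v) b ↔ LegalBetween a u c ∧ LegalBetween c v b := by
  have : some a :: (u ++ some c :: v ++ [some b]) =
      (some a :: u) ++ some c :: (v ++ [some b]) := by
    simp
  rw [LegalBetween, this, List.isChain_split]
  rfl

theorem isChain_cons_replicate_succ_none_append (x : EdgeState) (j : ℕ) (l : List EdgeState) :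
    List.IsChain NoSinkBetween (x :: (List.replicate (j + 1) none ++ l)) ↔
      List.IsChain NoSinkBetween l := by
  induction j generalizing x with
  | zero => simp [List.isChain_cons, NoSinkBetween]
  | succ j ih =>
    rw [List.replicate_succ, List.cons_append, List.isChain_cons_cons, ih]
    simp [NoSinkBetween]

theorem legalBetween_segment_iff {a d b : Bool} {j k : ℕ} :
    LegalBetween a (List.replicate j none ++ some d :: List.replicate k none) b ↔
      SegMoveOK a j d k b := by
  rw [legalBetween_append_some]
  cases j <;> cases k <;>
    simp [LegalBetween, isChain_cons_replicate_succ_none_append, SegMoveOK, NoSinkBetween]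

theorem movesBetween_append_some {a c b : Bool} {u v : List EdgeState}
    (hu : LegalBetween a u c) (hv : LegalBetween c v b) :
    movesBetween a (u ++ some c :: v) b =
      (· ++ some c :: v) '' movesBetween a u c ∪ (u ++ some c :: ·) '' movesBetween c v b := by
  ext es'
  constructor
  · rintro ⟨u', d, v', heq, rfl, hleg⟩
    rcases List.append_eq_append_iff.mp heq with ⟨_ | ⟨x, w⟩, rfl, hw⟩ | ⟨_ | ⟨x, w⟩, rfl, hw⟩
    · simp at hw
    · obtain ⟨rfl, rfl⟩ : x = some c ∧ v = w ++ none :: v' := by simpa [eq_comm] using hw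
      right
      refine ⟨w ++ some d :: v', ⟨w, d, v', rfl, rfl, ?_⟩, by simp⟩
      exact (legalBetween_append_some.mp (by simpa using hleg)).2
    · simp at hw
    · obtain ⟨rfl, rfl⟩ : x = none ∧ v' = w ++ some c :: v := by simpa [eq_comm] using hw
      left
      refine ⟨u' ++ some d :: w, ⟨u', d, w, by simp, rfl, ?_⟩, by simp⟩
      exact (legalBetween_append_some.mp (by simpa using hleg)).1
  · rintro (⟨w, ⟨u', d, v', rfl, rfl, hw⟩, rfl⟩ | ⟨w, ⟨u', d, v', rfl, rfl, hw⟩, rfl⟩)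
    · exact ⟨u', d, v' ++ some c :: v, by simp, by simp,
        by simpa using legalBetween_append_some.mpr ⟨hw, hv⟩⟩
    · exact ⟨u ++ some c :: u', d, v', by simp, by simp,
        by simpa using legalBetween_append_some.mpr ⟨hu, hw⟩⟩

theorem mem_movesBetween_replicate {a b : Bool} {n : ℕ} {es' : List EdgeState} :
    es' ∈ movesBetween a (List.replicate n none) b ↔
      ∃ j k d, j + 1 + k = n ∧ SegMoveOK a j d k b ∧
        es' = List.replicate j none ++ some d :: List.replicate k none := by
  constructor
  · rintro ⟨u, d, v, heq, rfl, hleg⟩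
    have hnone : ∀ x ∈ u ++ none :: v, x = none :=
      fun x hx => List.eq_of_mem_replicate (heq ▸ hx)
    have hu : u = List.replicate u.length none :=
      List.eq_replicate_iff.mpr ⟨rfl, fun x hx => hnone x (List.mem_append_left _ hx)⟩
    have hv : v = List.replicate v.length none :=
      List.eq_replicate_iff.mpr
        ⟨rfl, fun x hx => hnone x (List.mem_append_right _ (List.mem_cons_of_mem _ hx))⟩
    have hn := congrArg List.length heq
    simp only [List.length_replicate, List.length_append, List.length_cons] at hn
    rw [hu, hv] at hleg ⊢
    exact ⟨u.length, v.length, d, by omega, legalBetween_segment_iff.mp hleg, rfl⟩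
  · rintro ⟨j, k, d, rfl, hok, rfl⟩
    exact ⟨List.replicate j none, d, List.replicate k none, by simp [List.replicate_add], rfl,
      legalBetween_segment_iff.mpr hok⟩

theorem image_posNim_movesBetween_replicate (a b : Bool) (n : ℕ) :
    (posNim a 0 · b) '' movesBetween a (List.replicate n none) b =
      {x | x ∈ segOptions a b n} := by
  ext x
  simp only [Set.mem_image, mem_movesBetween_replicate, Set.mem_ofPred_eq, mem_segOptions]
  constructor
  · rintro ⟨_, ⟨j, k, d, hn, hok, rfl⟩, rfl⟩
    exact ⟨j, k, d, hn, hok, by simp [posNim_append_some, posNim_replicate]⟩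
  · rintro ⟨j, k, d, hn, hok, rfl⟩
    exact ⟨_, ⟨j, k, d, hn, hok, rfl⟩, by simp [posNim_append_some, posNim_replicate]⟩

theorem isMex_posNim_replicate (a b : Bool) (n : ℕ) :
    IsMex ((posNim a 0 · b) '' movesBetween a (List.replicate n none) b) (segNim a b n) := by
  rw [image_posNim_movesBetween_replicate]
  exact isMex_segOptions a b n

theorem isMex_posNim (es : List EdgeState) (a : Bool) (k : ℕ) (b : Bool)
    (hleg : LegalBetween a (List.replicate k none ++ es) b) :
    IsMex ((posNim a 0 · b) '' movesBetween a (List.replicate k none ++ es) b)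
      (posNim a k es b) := by
  induction es generalizing a k with
  | nil => simpa [posNim] using isMex_posNim_replicate a b k
  | cons x t ih =>
    cases x with
    | none =>
      rw [show List.replicate k none ++ none :: t = List.replicate (k + 1) none ++ t by
        simp [List.replicate_succ']] at hleg ⊢
      exact ih a (k + 1) hleg
    | some c =>
      obtain ⟨hl, hr⟩ := legalBetween_append_some.mp hleg
      have := (isMex_posNim_replicate a c k).xor (ih c 0 (by simpa using hr))
      rw [movesBetween_append_some hl hr]
      simp only [Set.image_union, Set.image_image, posNim_append_some, posNim_replicate,
        zero_add, List.replicate_zero, List.nil_append] at this ⊢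
      exact this

theorem isChain_noSinkBetween_iff {l : List EdgeState} :
    List.IsChain NoSinkBetween l ↔
      ∀ j, ¬(l[j]? = some (some true) ∧ l[j + 1]? = some (some false)) := by
  simp only [List.isChain_iff_getElem, NoSinkBetween, List.getElem?_eq_some_iff, not_and,
    forall_exists_index]
  exact ⟨fun h j _ h₁ ⟨hj, h₂⟩ => h j hj h₁ h₂,
    fun h j hj h₁ h₂ => h j (by omega) h₁ ⟨hj, h₂⟩⟩

theorem lineOK_iff_legalBetween {es : List EdgeState} (hne : es ≠ []) :
    LineOK true false false es ↔ LegalBetween true es false := by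
  rw [LegalBetween, List.isChain_cons, List.isChain_append, List.head?_append_of_ne_nil _ hne]
  simp only [LineOK, isChain_noSinkBetween_iff]
  cases es.head? <;> cases es.getLast? <;> simp [NoSinkBetween] <;> tauto

theorem lineMoves_eq_movesBetween (es : List EdgeState) :
    lineMoves true false false es = movesBetween true es false := by
  ext es'
  constructor
  · rintro ⟨j, d, hj, rfl, hok⟩
    obtain ⟨hjlen, hnone⟩ := List.getElem?_eq_some_iff.mp hj
    have hsplit : es = es.take j ++ none :: es.drop (j + 1) := by
      rw [← hnone, ← List.drop_eq_getElem_cons hjlen, List.take_append_drop]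
    have hset : es.set j (some d) = es.take j ++ some d :: es.drop (j + 1) := by
      rw [List.set_eq_take_append_cons_drop, if_pos hjlen]
    rw [hset] at hok ⊢
    exact ⟨_, d, _, hsplit, rfl, (lineOK_iff_legalBetween (by simp)).mp hok⟩
  · rintro ⟨u, d, v, rfl, rfl, hleg⟩
    exact ⟨u.length, d, by simp, by simp, (lineOK_iff_legalBetween (by simp)).mpr hleg⟩

theorem count_none_lt_of_mem_movesBetween {a b : Bool} {es es' : List EdgeState}
    (h : es' ∈ movesBetween a es b) : es'.count none < es.count none := by
  obtain ⟨u, d, v, rfl, rfl, -⟩ := h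
  simp [List.count_append]

theorem legalBetween_replicate {a b : Bool} {n : ℕ} (hn : n ≠ 0) :
    LegalBetween a (List.replicate n none) b := by
  obtain ⟨m, rfl⟩ := Nat.exists_eq_succ_of_ne_zero hn
  rw [LegalBetween, isChain_cons_replicate_succ_none_append]
  exact List.isChain_singleton _

theorem lineNim_eq_segNim {n : ℕ} (hn : n ≠ 0) :
    lineNim true none none n = segNim true false n := by
  simp only [lineNim, Option.map_none, Option.toList_none, List.nil_append, List.append_nil,
    Option.isSome_none, List.length_replicate]
  rw [show segNim true false n = posNim true 0 (List.replicate n none) false by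
    rw [posNim_replicate, zero_add]]
  refine grundyAux_eq_of_isMex (P := (LegalBetween true · false)) (posNim true 0 · false)
    (List.count none) (fun es hes => ?_) (fun es _ es' hes' => ?_) n _
    (legalBetween_replicate hn) (by simp)
  · rw [lineMoves_eq_movesBetween]
    simpa using isMex_posNim es true 0 false (by simpa using hes)
  · rw [lineMoves_eq_movesBetween] at hes'
    obtain ⟨_, _, _, _, rfl, hleg⟩ := hes'
    exact ⟨hleg, count_none_lt_of_mem_movesBetween ⟨_, _, _, ‹_›, rfl, hleg⟩⟩

/-- The Grundy values of Cycles with Sources on a path with `n`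
unmarked edges: for `n = 1, …, 18` they are `0,1,0,1,0,3,2,0,2,3,0,1,0,1,0,5,7,0`
in order, and for `n ≥ 19` they repeat the 17-term sequence
`1,0,1,0,3,2,4,5,3,0,1,0,1,0,5,7,8` (so they are eventually periodic
with period 17). -/
theorem cws_line_nimbers :
    (∀ n, 1 ≤ n → n ≤ 18 →
      lineNim true none none n =
        ([0,1,0,1,0,3,2,0,2,3,0,1,0,1,0,5,7,0] : List ℕ).getD (n - 1) 0) ∧
    (∀ n, 19 ≤ n →
      lineNim true none none n =
        ([1,0,1,0,3,2,4,5,3,0,1,0,1,0,5,7,8] : List ℕ).getD ((n - 19) % 17) 0) := by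
  refine ⟨fun n h1 h18 => ?_, fun n h19 => ?_⟩
  · rw [lineNim_eq_segNim (by omega)]
    interval_cases n <;> rfl
  · rw [lineNim_eq_segNim (by omega)]
    simp [segNim, periodicExt, show ¬ n < 19 by omega]
end

section
/- For every natural number n ≥ 2, the Grundy value (Nimber) of the standard Game of Cycles played on a graph consisting of a single cycle with n edges is 0 if n is even and 1 if n is odd. -/
/-- A cycle position with edges `0, …, n-1` (edge `j` directed by `some true` from
vertex `j` to vertex `j+1 (mod n)`) is admissible: no vertex is a sink, and,
unless `sourceAllowed`, no vertex is a source. -/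
def CycleOK (sourceAllowed : Bool) (es : List EdgeState) : Prop :=
  ∀ j < es.length,
    ¬ (es[j]? = some (some true) ∧
        es[(j+1) % es.length]? = some (some false)) ∧
    (sourceAllowed = true ∨
      ¬ (es[j]? = some (some false) ∧
          es[(j+1) % es.length]? = some (some true)))

/-- A legal move on a cycle position marks an unmarked edge with one of the two
directions so that the resulting position is admissible. -/
def cycleMoves (sourceAllowed : Bool) (es : List EdgeState) : Set (List EdgeState) :=
  { es' | ∃ j d, es[j]? = some none ∧ es' = es.set j (some d) ∧
      CycleOK sourceAllowed es' }

/-- Grundy value (Nimber) of the game played on a single cycle with `n` edges,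
all initially unmarked. -/
noncomputable def cycleNim (sourceAllowed : Bool) (n : ℕ) : ℕ :=
  grundyAux (cycleMoves sourceAllowed) n (List.replicate n none)

lemma mex_empty : mex (∅ : Set ℕ) = 0 :=
  Nat.sInf_eq_zero.2 (Or.inl (Set.notMem_empty 0))

lemma mex_singleton (a : ℕ) : mex {a} = if a = 0 then 1 else 0 := by
  split_ifs with ha
  · subst ha
    have hmem : mex {0} ∈ {n : ℕ | n ∉ ({0} : Set ℕ)} := Nat.sInf_mem ⟨1, by simp⟩
    refine le_antisymm (Nat.sInf_le (by simp)) (Nat.one_le_iff_ne_zero.2 ?_)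
    simpa using hmem
  · exact Nat.sInf_eq_zero.2 (Or.inl (by simpa [eq_comm] using ha))

lemma mex_singleton_mod_two (c : ℕ) : mex {c % 2} = (c + 1) % 2 := by
  rw [mex_singleton]; split_ifs <;> omega

theorem grundyAux_eq_mod_two_s8 {α : Type} (moves : α → Set α) (P : α → Prop) (c : α → ℕ)
    (h_moves : ∀ x, P x → ∀ y ∈ moves x, P y ∧ c y + 1 = c x)
    (h_terminal : ∀ x, P x → moves x = ∅ → Even (c x)) (k : ℕ) (x : α) (hx : P x)
    (hc : c x ≤ k) : grundyAux moves k x = c x % 2 := by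
  induction k generalizing x with
  | zero => simp [grundyAux, Nat.le_zero.1 hc]
  | succ k ih =>
    rw [grundyAux]
    rcases (moves x).eq_empty_or_nonempty with hempty | ⟨y₀, hy₀⟩
    · rw [hempty, Set.image_empty, mex_empty, Nat.even_iff.1 (h_terminal x hx hempty)]
    · have hc₀ := (h_moves x hx y₀ hy₀).2
      have hconst : grundyAux moves k '' moves x = (fun _ => (c x - 1) % 2) '' moves x := by
        refine Set.image_congr fun y hy => ?_
        obtain ⟨hPy, hcy⟩ := h_moves x hx y hy
        rw [ih y hPy (by omega)]
        congr 1
        omega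
      rw [hconst, Set.Nonempty.image_const ⟨y₀, hy₀⟩, mex_singleton_mod_two]
      congr 1
      omega

lemma add_one_mod_add_sub_one_mod {n j : ℕ} (h : j < n) : ((j + 1) % n + n - 1) % n = j := by
  rcases Nat.lt_or_ge (j + 1) n with h1 | h1
  · rw [Nat.mod_eq_of_lt h1, show j + 1 + n - 1 = j + n by omega, Nat.add_mod_right,
      Nat.mod_eq_of_lt h]
  · rw [show j + 1 = n by omega, Nat.mod_self, Nat.mod_eq_of_lt (by omega)]
    omega

lemma sum_range_add_one_mod {M : Type*} [AddCommMonoid M] (f : ℕ → M) (n : ℕ) :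
    ∑ j ∈ Finset.range n, f ((j + 1) % n) = ∑ j ∈ Finset.range n, f j := by
  cases n with
  | zero => rfl
  | succ m =>
    rw [Finset.sum_range_succ, Finset.sum_range_succ', Nat.mod_self]
    congr 1
    exact Finset.sum_congr rfl fun j hj =>
      by rw [Nat.mod_eq_of_lt (by simpa using (Finset.mem_range.1 hj))]

def dirBit : Option EdgeState → ZMod 2
  | some (some true) => 1
  | _ => 0

def heading (es : List EdgeState) (j : ℕ) : ZMod 2 :=
  if es[j]? = some none then dirBit es[(j + es.length - 1) % es.length]? else dirBit es[j]?

section Cycle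

variable {es : List EdgeState}

lemma cycleOK_false_iff : CycleOK false es ↔
    ∀ j < es.length, ∀ d d' : Bool, es[j]? = some (some d) →
      es[(j + 1) % es.length]? = some (some d') → d' = d := by
  refine forall₂_congr fun j _ => ?_
  constructor
  · rintro ⟨hsink, hsource⟩ d d' h h'
    cases d <;> cases d' <;> simp_all
  · intro h
    exact ⟨fun ⟨h₁, h₂⟩ => by simpa using h _ _ h₁ h₂,
      Or.inr fun ⟨h₁, h₂⟩ => by simpa using h _ _ h₁ h₂⟩

lemma cycleOK_replicate_none (sourceAllowed : Bool) (n : ℕ) :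
    CycleOK sourceAllowed (List.replicate n none) := by
  intro j hj
  simp_all

lemma cycleOK_set (hok : CycleOK false es) {i : ℕ} (hi : i < es.length)
    {d : Bool} (hsucc : es[(i + 1) % es.length]? ≠ some (some !d))
    (hpred : es[(i + es.length - 1) % es.length]? ≠ some (some !d)) :
    CycleOK false (es.set i (some d)) := by
  rw [cycleOK_false_iff] at hok ⊢
  simp only [List.length_set, List.getElem?_set, hi, if_true]
  intro j hj d₁ d₂ h₁ h₂
  split_ifs at h₁ h₂ with hij hij' hij'
  · simp_all
  · subst hij
    obtain rfl : d₁ = d := by simpa using h₁.symm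
    rw [h₂] at hsucc
    cases d₁ <;> cases d₂ <;> simp at hsucc ⊢
  · have hj' : j = (i + es.length - 1) % es.length := by
      rw [hij', add_one_mod_add_sub_one_mod hj]
    obtain rfl : d₂ = d := by simpa using h₂.symm
    rw [← hj', h₁] at hpred
    cases d₁ <;> cases d₂ <;> simp at hpred ⊢
  · exact hok j hj d₁ d₂ h₁ h₂

lemma exists_opposite_neighbours_of_cycleMoves_eq_empty
    (hok : CycleOK false es) (hmoves : cycleMoves false es = ∅) {i : ℕ}
    (hi : es[i]? = some none) :
    ∃ d, es[(i + 1) % es.length]? = some (some d) ∧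
      es[(i + es.length - 1) % es.length]? = some (some !d) := by
  have hilt : i < es.length := (List.getElem?_eq_some_iff.1 hi).1
  have hblocked : ∀ d : Bool, es[(i + 1) % es.length]? = some (some !d) ∨
      es[(i + es.length - 1) % es.length]? = some (some !d) := by
    intro d
    by_contra! h
    have hmove : es.set i (some d) ∈ cycleMoves false es :=
      ⟨i, d, hi, rfl, cycleOK_set hok hilt h.1 h.2⟩
    simp [hmoves] at hmove
  rcases hblocked true with h₁ | h₁ <;> rcases hblocked false with h₂ | h₂
  · simp_all
  · exact ⟨false, h₁, h₂⟩
  · exact ⟨true, h₂, h₁⟩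
  · simp_all

lemma heading_add_one_mod (hok : CycleOK false es)
    (hdead : ∀ i, es[i]? = some none → ∃ d, es[(i + 1) % es.length]? = some (some d) ∧
      es[(i + es.length - 1) % es.length]? = some (some !d))
    {j : ℕ} (hj : j < es.length) :
    heading es ((j + 1) % es.length) = heading es j + if es[j]? = some none then 1 else 0 := by
  obtain ⟨x, hx⟩ : ∃ x, es[j]? = some x := ⟨_, List.getElem?_eq_getElem hj⟩
  rcases x with _ | d
  · obtain ⟨d, hsucc, hpred⟩ := hdead j hx
    cases d <;> simp [heading, hx, hsucc, hpred, dirBit, CharTwo.add_self_eq_zero]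
  · have hsucc_lt : (j + 1) % es.length < es.length := Nat.mod_lt _ (by omega)
    obtain ⟨y, hy⟩ : ∃ y, es[(j + 1) % es.length]? = some y :=
      ⟨_, List.getElem?_eq_getElem hsucc_lt⟩
    rcases y with _ | d'
    · simp [heading, hx, hy, add_one_mod_add_sub_one_mod hj]
    · obtain rfl := (cycleOK_false_iff.1 hok) j hj d d' hx hy
      simp [heading, hx, hy]

lemma count_none_eq_sum (es : List EdgeState) :
    (es.count none : ZMod 2) =
      ∑ j ∈ Finset.range es.length, if es[j]? = some none then 1 else 0 := by
  induction es with
  | nil => simp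
  | cons a t ih =>
    rw [List.length_cons, Finset.sum_range_succ', List.count_cons]
    simp only [List.getElem?_cons_succ, List.getElem?_cons_zero, ← ih]
    cases a <;> simp [add_comm]

lemma even_count_none_of_cycleMoves_eq_empty (hok : CycleOK false es)
    (hmoves : cycleMoves false es = ∅) : Even (es.count none) := by
  have hsum := Finset.sum_congr rfl fun j hj => heading_add_one_mod hok
    (fun _ => exists_opposite_neighbours_of_cycleMoves_eq_empty hok hmoves) (Finset.mem_range.1 hj)
  rw [sum_range_add_one_mod (heading es), Finset.sum_add_distrib, ← count_none_eq_sum,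
    left_eq_add] at hsum
  exact (ZMod.natCast_eq_zero_iff_even).1 hsum

lemma grundyAux_cycleMoves_false {k : ℕ} (hok : CycleOK false es)
    (hk : es.count none ≤ k) : grundyAux (cycleMoves false) k es = es.count none % 2 := by
  refine grundyAux_eq_mod_two_s8 _ (CycleOK false) (List.count none) ?_
    (fun _ hx hmoves => even_count_none_of_cycleMoves_eq_empty hx hmoves) k es hok hk
  rintro x - y ⟨j, d, hj, rfl, hok'⟩
  refine ⟨hok', ?_⟩
  have hj' := List.getElem?_eq_some_iff.1 hj
  rw [List.count_set hj'.1, hj'.2]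
  have hpos : 0 < x.count none := List.count_pos_iff.2 (List.mem_of_getElem? hj)
  simp only [BEq.rfl, ↓reduceIte, Option.beq_none, Option.isNone_some, Bool.false_eq_true,
    add_zero]
  omega

end Cycle

theorem cycle_nimber_standard_general (n : ℕ) :
    cycleNim false n = if Even n then 0 else 1 := by
  rw [cycleNim, grundyAux_cycleMoves_false (cycleOK_replicate_none false n)
    (by rw [List.count_replicate_self]), List.count_replicate_self]
  split_ifs with h
  · exact Nat.even_iff.1 h
  · exact Nat.odd_iff.1 (Nat.not_even_iff_odd.1 h)

/-- For every `n ≥ 2`, the Grundy value of the standard Game of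
Cycles on a single cycle with `n` edges is `0` if `n` is even and `1` if `n` is odd. -/
theorem cycle_nimber_standard (n : ℕ) (hn : 2 ≤ n) :
    cycleNim false n = if Even n then 0 else 1 :=
  cycle_nimber_standard_general n
end

section
/- For every natural number n ≥ 2, the Grundy value (Nimber) of Cycles with Sources played on a graph consisting of a single cycle with n edges is 0; in particular, the second player always wins. -/
/-- `Loses moves k x` (with fuel `k` dominating the number of remaining moves):
the player to move at position `x` loses under normal play, i.e. every move leads
to a position from which the opponent has a move back into a losing position. -/
def Loses {α : Type} (moves : α → Set α) : ℕ → α → Prop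
  | 0, _ => True
  | k+1, x => ∀ y ∈ moves x, ∃ z ∈ moves y, Loses moves k z

/-!
With sources allowed, a move from a legal position is legal exactly when the head of the new
arrow has no incoming arrow yet. So a move uses up one edge and one adjacent vertex: it places
a domino on the cycle of length `2n` formed by alternating vertices and edges. The second
player takes the reflection of this cycle (edge `k` ↔ vertex `c - k`) that fixes the first
domino, answers with the other domino it fixes, and afterwards answers every domino with its
mirror image. That image is free and differs from the domino just played, because both fixed
dominoes are already used; so the second player always has a move.
-/

theorem mex_eq_zero_iff {S : Set ℕ} (hS : S.Finite) : mex S = 0 ↔ 0 ∉ S := by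
  refine ⟨fun h h0 => ?_, fun h => Nat.sInf_eq_zero.mpr (Or.inl h)⟩
  have hmem : mex S ∉ S := Nat.sInf_mem hS.infinite_compl.nonempty
  exact hmem (h ▸ h0)

section Strategy

variable {α : Type} {moves : α → Set α} {P : α → Prop}

theorem loses_of_forall_exists_mem (hP : ∀ x, P x → ∀ y ∈ moves x, ∃ z ∈ moves y, P z) :
    ∀ k x, P x → Loses moves k x
  | 0, _, _ => trivial
  | k + 1, x, hx => fun y hy =>
    let ⟨z, hz, hPz⟩ := hP x hx y hy
    ⟨z, hz, loses_of_forall_exists_mem hP k z hPz⟩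

theorem grundyAux_eq_zero_of_forall_exists_mem
    (hP : ∀ x, P x → ∀ y ∈ moves x, ∃ z ∈ moves y, P z)
    (hfin : ∀ x, (moves x).Finite) (μ : α → ℕ)
    (hμ : ∀ x, ∀ y ∈ moves x, μ y < μ x) :
    ∀ k x, P x → μ x ≤ k → grundyAux moves k x = 0
  | 0, _, _, _ => rfl
  | k + 1, x, hx, hxk => by
    rw [grundyAux, mex_eq_zero_iff ((hfin x).image _)]
    rintro ⟨y, hy, hgy⟩
    obtain ⟨z, hz, hPz⟩ := hP x hx y hy
    have hzy := hμ y z hz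
    have hyx := hμ x y hy
    obtain ⟨k, rfl⟩ : ∃ k', k = k' + 1 := ⟨k - 1, by omega⟩
    rw [grundyAux, mex_eq_zero_iff ((hfin y).image _)] at hgy
    exact hgy ⟨z, hz, grundyAux_eq_zero_of_forall_exists_mem hP hfin μ hμ k z hPz (by omega)⟩

end Strategy

theorem Nat.eq_or_eq_add_of_mod_eq {x y n : ℕ} (hx : x < 2 * n) (hy : y < 2 * n)
    (h : x % n = y % n) : x = y ∨ x = y + n ∨ y = x + n := by
  have hx' := Nat.div_add_mod x n
  have hy' := Nat.div_add_mod y n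
  have hxn : x / n < 2 := Nat.div_lt_of_lt_mul (by rwa [mul_comm])
  have hyn : y / n < 2 := Nat.div_lt_of_lt_mul (by rwa [mul_comm])
  generalize x / n = q at hx' hxn
  generalize y / n = r at hy' hyn
  interval_cases q <;> interval_cases r <;> omega

namespace CycleWithSources

variable {n : ℕ} {es : List EdgeState}

def edgeAt (es : List EdgeState) (i : ZMod n) : EdgeState := es[i.val]?.getD none

def IsMarked (es : List EdgeState) (i : ZMod n) : Prop := edgeAt es i ≠ none

/-- Vertex `v` lies between edges `v - 1` and `v`. -/
def HasIncoming (es : List EdgeState) (v : ZMod n) : Prop :=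
  edgeAt es (v - 1) = some true ∨ edgeAt es v = some false

def arrowHead (i : ZMod n) (d : Bool) : ZMod n := if d then i + 1 else i

/-- The domino made of edge `i` and vertex `arrowHead i d` is already partly used. -/
def IsBlocked (es : List EdgeState) (i : ZMod n) (d : Bool) : Prop :=
  IsMarked es i ∨ HasIncoming es (arrowHead i d)

/-- The reflection exchanging edge `k` and vertex `c - k` sends the domino `(i, d)` to the
domino `(mirrorEdge c i d, d)`. -/
def mirrorEdge (c i : ZMod n) (d : Bool) : ZMod n := c - arrowHead i d

def IsSymmetric (c : ZMod n) (es : List EdgeState) : Prop :=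
  ∀ k, IsMarked es k ↔ HasIncoming es (c - k)

theorem arrowHead_mirrorEdge (c i : ZMod n) (d : Bool) :
    arrowHead (mirrorEdge c i d) d = c - i := by
  unfold mirrorEdge arrowHead
  split_ifs <;> ring

theorem sub_eq_arrowHead_iff (c i k : ZMod n) (d : Bool) :
    c - k = arrowHead i d ↔ k = mirrorEdge c i d := by
  rw [mirrorEdge, eq_sub_iff_add_eq, sub_eq_iff_eq_add, eq_comm, add_comm]

theorem mirrorEdge_eq_self_iff (c i : ZMod n) (d : Bool) :
    mirrorEdge c i d = i ↔ i + arrowHead i d = c := by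
  rw [eq_comm, ← sub_eq_arrowHead_iff, sub_eq_iff_eq_add, eq_comm, add_comm]

theorem add_arrowHead (a : ZMod n) (e : Bool) :
    a + arrowHead a e = 2 * a + (e.toNat : ZMod n) := by
  cases e <;> simp only [arrowHead, if_true, Bool.false_eq_true, if_false, Bool.toNat_true,
    Bool.toNat_false, Nat.cast_one, Nat.cast_zero] <;> ring

theorem edgeAt_replicate (i : ZMod n) : edgeAt (List.replicate n none) i = none := by
  simp only [edgeAt, List.getElem?_replicate]
  split <;> rfl

theorem isSymmetric_replicate (c : ZMod n) : IsSymmetric c (List.replicate n none) := by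
  simp [IsSymmetric, IsMarked, HasIncoming, edgeAt_replicate]

theorem cycleOK_of_mem_cycleMoves {s : Bool} {y : List EdgeState}
    (hy : y ∈ cycleMoves s es) : CycleOK s y :=
  let ⟨_, _, _, _, hok⟩ := hy
  hok

theorem count_none_lt_of_mem_cycleMoves {s : Bool} {y : List EdgeState}
    (hy : y ∈ cycleMoves s es) : y.count none < es.count none := by
  obtain ⟨j, d, hj, rfl, -⟩ := hy
  obtain ⟨hjlt, hget⟩ := List.getElem?_eq_some_iff.mp hj
  have hpos := List.count_pos_iff.mpr (List.mem_of_getElem? hj)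
  rw [List.count_set hjlt, hget]
  simp only [beq_self_eq_true, if_true, reduceCtorEq, beq_iff_eq, if_false, add_zero]
  omega

theorem cycleMoves_finite (s : Bool) (es : List EdgeState) : (cycleMoves s es).Finite := by
  refine ((Set.finite_Iio es.length).prod Set.finite_univ).image
    (fun p : ℕ × Bool => es.set p.1 (some p.2)) |>.subset ?_
  rintro y ⟨j, d, hj, rfl, -⟩
  exact ⟨(j, d), ⟨(List.getElem?_eq_some_iff.mp hj).1, trivial⟩, rfl⟩

namespace IsSymmetric

variable {c : ZMod n}

theorem isBlocked_mirrorEdge_iff (h : IsSymmetric c es) (i : ZMod n) (d : Bool) :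
    IsBlocked es (mirrorEdge c i d) d ↔ IsBlocked es i d := by
  rw [IsBlocked, IsBlocked, h, h, arrowHead_mirrorEdge, mirrorEdge, sub_sub_cancel, or_comm]

theorem isBlocked_iff_isMarked (h : IsSymmetric c es) {i : ZMod n} {d : Bool}
    (hfix : mirrorEdge c i d = i) : IsBlocked es i d ↔ IsMarked es i := by
  rw [IsBlocked, h i, (sub_eq_arrowHead_iff c i i d).2 hfix.symm, or_self]

end IsSymmetric

section Position

variable [NeZero n]

theorem getElem?_val (hlen : es.length = n) (i : ZMod n) :
    es[i.val]? = some (edgeAt es i) := by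
  have : i.val < es.length := hlen ▸ i.val_lt
  simp [edgeAt, this]

theorem edgeAt_set (hlen : es.length = n) (i j : ZMod n) (a : EdgeState) :
    edgeAt (es.set j.val a) i = if i = j then a else edgeAt es i := by
  have : j.val < es.length := hlen ▸ j.val_lt
  by_cases h : i = j
  · simp [edgeAt, h, this]
  · have hv : j.val ≠ i.val := fun e => h (ZMod.val_injective n e).symm
    simp [edgeAt, h, hv]

theorem cycleOK_true_iff (hlen : es.length = n) :
    CycleOK true es ↔
      ∀ i : ZMod n, ¬ (edgeAt es i = some true ∧ edgeAt es (i + 1) = some false) := by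
  have hsucc (i : ZMod n) : (i.val + 1) % es.length = (i + 1).val := by
    rw [hlen, ← ZMod.val_natCast, Nat.cast_succ, ZMod.natCast_zmod_val]
  unfold CycleOK
  constructor
  · intro h i
    have := (h i.val (hlen ▸ i.val_lt)).1
    rwa [hsucc, getElem?_val hlen, getElem?_val hlen, Option.some_inj, Option.some_inj] at this
  · intro h j hj
    obtain ⟨i, rfl⟩ : ∃ i : ZMod n, i.val = j := ⟨j, ZMod.val_cast_of_lt (hlen ▸ hj)⟩
    rw [hsucc, getElem?_val hlen, getElem?_val hlen, Option.some_inj, Option.some_inj]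
    exact ⟨h i, Or.inl rfl⟩

theorem mem_cycleMoves_iff (hlen : es.length = n) (s : Bool) (y : List EdgeState) :
    y ∈ cycleMoves s es ↔ ∃ (i : ZMod n) (d : Bool),
      edgeAt es i = none ∧ y = es.set i.val (some d) ∧ CycleOK s y := by
  constructor
  · rintro ⟨j, d, hj, rfl, hok⟩
    have hjv : ((j : ZMod n)).val = j :=
      ZMod.val_cast_of_lt (hlen ▸ (List.getElem?_eq_some_iff.mp hj).1)
    refine ⟨j, d, ?_, by rw [hjv], hok⟩
    rw [← hjv, getElem?_val hlen] at hj
    exact Option.some_inj.mp hj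
  · rintro ⟨i, d, hi, rfl, hok⟩
    exact ⟨i.val, d, by rw [getElem?_val hlen, hi], rfl, hok⟩

theorem isMarked_set (hlen : es.length = n) (i k : ZMod n) (d : Bool) :
    IsMarked (es.set i.val (some d)) k ↔ IsMarked es k ∨ k = i := by
  unfold IsMarked
  rw [edgeAt_set hlen]
  by_cases h : k = i <;> simp [h]

theorem hasIncoming_set (hlen : es.length = n) {i : ZMod n} (hi : edgeAt es i = none)
    (d : Bool) (v : ZMod n) :
    HasIncoming (es.set i.val (some d)) v ↔ HasIncoming es v ∨ v = arrowHead i d := by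
  unfold HasIncoming arrowHead
  rw [edgeAt_set hlen, edgeAt_set hlen]
  have : v - 1 = i ↔ v = i + 1 := sub_eq_iff_eq_add
  cases d <;> by_cases h1 : v - 1 = i <;> by_cases h2 : v = i <;> simp_all

theorem isBlocked_set_iff (hlen : es.length = n) {i : ZMod n} (hi : edgeAt es i = none)
    (d : Bool) (k : ZMod n) (e : Bool) :
    IsBlocked (es.set i.val (some d)) k e ↔
      IsBlocked es k e ∨ k = i ∨ arrowHead k e = arrowHead i d := by
  simp only [IsBlocked, isMarked_set hlen, hasIncoming_set hlen hi]
  tauto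

theorem cycleOK_set_iff [Fact (1 < n)] (hlen : es.length = n) (hok : CycleOK true es)
    {i : ZMod n} (hi : edgeAt es i = none) (d : Bool) :
    CycleOK true (es.set i.val (some d)) ↔ ¬ HasIncoming es (arrowHead i d) := by
  rw [cycleOK_true_iff hlen] at hok
  rw [cycleOK_true_iff (by rw [List.length_set, hlen])]
  unfold HasIncoming arrowHead
  simp only [edgeAt_set hlen]
  have : i + 1 ≠ i := by simp
  have : i - 1 + 1 = i := sub_add_cancel i 1
  cases d <;> simp only [if_true, Bool.false_eq_true, if_false] <;> grind

theorem mem_cycleMoves_true_iff [Fact (1 < n)] (hlen : es.length = n) (hok : CycleOK true es)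
    (y : List EdgeState) :
    y ∈ cycleMoves true es ↔
      ∃ (i : ZMod n) (d : Bool), ¬ IsBlocked es i d ∧ y = es.set i.val (some d) := by
  rw [mem_cycleMoves_iff hlen]
  constructor
  · rintro ⟨i, d, hi, rfl, hok'⟩
    exact ⟨i, d, by simp [IsBlocked, IsMarked, hi, (cycleOK_set_iff hlen hok hi d).1 hok'], rfl⟩
  · rintro ⟨i, d, hfree, rfl⟩
    simp only [IsBlocked, IsMarked, not_or, not_not] at hfree
    exact ⟨i, d, hfree.1, rfl, (cycleOK_set_iff hlen hok hfree.1 d).2 hfree.2⟩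

namespace IsSymmetric

variable {c : ZMod n}

theorem set_of_mirrorEdge_eq_self (h : IsSymmetric c es) (hlen : es.length = n) {i : ZMod n}
    (hi : edgeAt es i = none) {d : Bool} (hfix : mirrorEdge c i d = i) :
    IsSymmetric c (es.set i.val (some d)) := by
  intro k
  rw [isMarked_set hlen, hasIncoming_set hlen hi, h k, sub_eq_arrowHead_iff, hfix]

theorem set_set_mirrorEdge (h : IsSymmetric c es) (hlen : es.length = n) {i : ZMod n}
    (hi : edgeAt es i = none) {d : Bool}
    (hj : edgeAt (es.set i.val (some d)) (mirrorEdge c i d) = none) :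
    IsSymmetric c ((es.set i.val (some d)).set (mirrorEdge c i d).val (some d)) := by
  have hlen' : (es.set i.val (some d)).length = n := by rw [List.length_set, hlen]
  intro k
  rw [isMarked_set hlen', isMarked_set hlen, hasIncoming_set hlen' hj, hasIncoming_set hlen hi,
    h k, arrowHead_mirrorEdge, sub_eq_arrowHead_iff, sub_right_inj]
  tauto

end IsSymmetric

/-- The dominoes fixed by the reflection for `c` are the solutions `(a, e)` of `2 a + e = c`;
there are exactly two, since `(a, e) ↦ 2 a + e` is the reduction `ℤ/2n → ℤ/n`. -/
theorem exists_ne_mirrorEdge_eq_self [Fact (1 < n)] (i : ZMod n) (d : Bool) :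
    ∃ j d', j ≠ i ∧ mirrorEdge (i + arrowHead i d) j d' = j ∧
      ∀ a e, mirrorEdge (i + arrowHead i d) a e = a → a = i ∨ a = j := by
  have hn : 1 < n := Fact.out
  have hi := i.val_lt
  have hd := Bool.toNat_le d
  obtain ⟨m, d', hm⟩ :
      ∃ (m : ℕ) (d' : Bool), 2 * m + d'.toNat = 2 * i.val + d.toNat + n := by
    rcases Nat.even_or_odd (2 * i.val + d.toNat + n) with ⟨m, hm⟩ | ⟨m, hm⟩
    exacts [⟨m, false, by simp; omega⟩, ⟨m, true, by simp; omega⟩]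
  have hd' := Bool.toNat_le d'
  have hcast : ((2 * m + d'.toNat : ℕ) : ZMod n) = ((2 * i.val + d.toNat : ℕ) : ZMod n) := by
    rw [hm, Nat.cast_add _ n, ZMod.natCast_self, add_zero]
  refine ⟨m, d', fun h => ?_, ?_, fun a e ha => ?_⟩
  · have hsub : ((m - i.val : ℕ) : ZMod n) = 0 := by
      rw [Nat.cast_sub (by omega), h, ZMod.natCast_zmod_val, sub_self]
    rw [← ZMod.val_eq_zero, ZMod.val_cast_of_lt (by omega)] at hsub
    omega
  · rw [mirrorEdge_eq_self_iff, add_arrowHead, add_arrowHead]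
    push_cast [ZMod.natCast_zmod_val] at hcast
    exact hcast
  · rw [mirrorEdge_eq_self_iff, add_arrowHead, add_arrowHead] at ha
    have he := Bool.toNat_le e
    have ha' := a.val_lt
    have hx : ((2 * a.val + e.toNat : ℕ) : ZMod n) = ((2 * i.val + d.toNat : ℕ) : ZMod n) := by
      push_cast [ZMod.natCast_zmod_val]
      exact ha
    rw [ZMod.natCast_eq_natCast_iff'] at hx
    rcases Nat.eq_or_eq_add_of_mod_eq (by omega) (by omega) hx with h | h | h
    · exact Or.inl (ZMod.val_injective n (by omega))
    · right
      rw [← ZMod.natCast_zmod_val a, show a.val = m by omega]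
    · right
      rw [← ZMod.natCast_zmod_val a, show m = a.val + n by omega, Nat.cast_add,
        ZMod.natCast_self, add_zero]

structure IsMirror (c : ZMod n) (es : List EdgeState) : Prop where
  length_eq : es.length = n
  cycleOK : CycleOK true es
  isSymmetric : IsSymmetric c es
  isBlocked_of_mirrorEdge_eq_self : ∀ i d, mirrorEdge c i d = i → IsBlocked es i d

theorem IsMirror.exists_response [Fact (1 < n)] {c : ZMod n} (h : IsMirror c es)
    {y : List EdgeState} (hy : y ∈ cycleMoves true es) :
    ∃ z ∈ cycleMoves true y, IsMirror c z := by
  obtain ⟨i, d, hfree, rfl⟩ := (mem_cycleMoves_true_iff h.length_eq h.cycleOK y).1 hy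
  have hlen : (es.set i.val (some d)).length = n := by rw [List.length_set, h.length_eq]
  have hi : edgeAt es i = none := not_not.mp (not_or.mp hfree).1
  have hfix : mirrorEdge c i d ≠ i := fun hfix =>
    hfree (h.isBlocked_of_mirrorEdge_eq_self i d hfix)
  have hmfree : ¬ IsBlocked (es.set i.val (some d)) (mirrorEdge c i d) d := by
    rw [isBlocked_set_iff h.length_eq hi, h.isSymmetric.isBlocked_mirrorEdge_iff,
      arrowHead_mirrorEdge, sub_eq_arrowHead_iff]
    rintro (hb | he | he)
    exacts [hfree hb, hfix he, hfix he.symm]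
  have hj : edgeAt (es.set i.val (some d)) (mirrorEdge c i d) = none :=
    not_not.mp (not_or.mp hmfree).1
  have hz := (mem_cycleMoves_true_iff hlen (cycleOK_of_mem_cycleMoves hy) _).2
    ⟨_, d, hmfree, rfl⟩
  refine ⟨_, hz, ⟨by rw [List.length_set, hlen], cycleOK_of_mem_cycleMoves hz,
    h.isSymmetric.set_set_mirrorEdge h.length_eq hi hj, fun k e hk => ?_⟩⟩
  rw [isBlocked_set_iff hlen hj, isBlocked_set_iff h.length_eq hi]
  exact Or.inl (Or.inl (h.isBlocked_of_mirrorEdge_eq_self k e hk))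

theorem exists_isMirror_of_mem_cycleMoves_replicate [Fact (1 < n)] {y : List EdgeState}
    (hy : y ∈ cycleMoves true (List.replicate n none)) :
    ∃ c : ZMod n, ∃ z ∈ cycleMoves true y, IsMirror c z := by
  have hlen₀ : (List.replicate n (none : EdgeState)).length = n := List.length_replicate
  have hok₀ : CycleOK true (List.replicate n none) :=
    (cycleOK_true_iff hlen₀).2 (by simp [edgeAt_replicate])
  obtain ⟨i, d, -, rfl⟩ := (mem_cycleMoves_true_iff hlen₀ hok₀ y).1 hy
  set c := i + arrowHead i d
  obtain ⟨j, d', hji, hj, hfixed⟩ := exists_ne_mirrorEdge_eq_self i d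
  have hlen : ((List.replicate n none).set i.val (some d)).length = n := by
    rw [List.length_set, hlen₀]
  have hi := edgeAt_replicate (n := n) i
  have hsym : IsSymmetric c ((List.replicate n none).set i.val (some d)) :=
    (isSymmetric_replicate c).set_of_mirrorEdge_eq_self hlen₀ hi
      ((mirrorEdge_eq_self_iff c i d).2 rfl)
  have hjfree : ¬ IsBlocked ((List.replicate n none).set i.val (some d)) j d' := by
    rw [hsym.isBlocked_iff_isMarked hj, isMarked_set hlen₀]
    simp [IsMarked, edgeAt_replicate, hji]
  have hz := (mem_cycleMoves_true_iff hlen (cycleOK_of_mem_cycleMoves hy) _).2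
    ⟨j, d', hjfree, rfl⟩
  have hjy : edgeAt ((List.replicate n none).set i.val (some d)) j = none :=
    not_not.mp (not_or.mp hjfree).1
  refine ⟨c, _, hz, ⟨by rw [List.length_set, hlen], cycleOK_of_mem_cycleMoves hz,
    hsym.set_of_mirrorEdge_eq_self hlen hjy hj, fun a e ha => Or.inl ?_⟩⟩
  rw [isMarked_set hlen, isMarked_set hlen₀]
  rcases hfixed a e ha with rfl | rfl <;> simp

end Position

end CycleWithSources

open CycleWithSources in
/-- For every `n ≥ 2`, the Grundy value of Cycles with Sources on
a single cycle with `n` edges is `0`; in particular the first player (the player to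
move in the fully unmarked position) loses, i.e. the second player always wins. -/
theorem cws_cycle_nimber_zero (n : ℕ) (hn : 2 ≤ n) :
    cycleNim true n = 0 ∧
    Loses (cycleMoves true) n (List.replicate n none) := by
  have : Fact (1 < n) := ⟨hn⟩
  let P (es : List EdgeState) : Prop := es = List.replicate n none ∨ ∃ c : ZMod n, IsMirror c es
  have hP : ∀ x, P x → ∀ y ∈ cycleMoves true x, ∃ z ∈ cycleMoves true y, P z := by
    rintro x (rfl | ⟨c, hc⟩) y hy
    · obtain ⟨c, z, hz, hzc⟩ := exists_isMirror_of_mem_cycleMoves_replicate hy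
      exact ⟨z, hz, Or.inr ⟨c, hzc⟩⟩
    · obtain ⟨z, hz, hzc⟩ := hc.exists_response hy
      exact ⟨z, hz, Or.inr ⟨c, hzc⟩⟩
  refine ⟨?_, loses_of_forall_exists_mem hP n _ (Or.inl rfl)⟩
  exact grundyAux_eq_zero_of_forall_exists_mem hP (cycleMoves_finite true) (List.count none)
    (fun _ _ => count_none_lt_of_mem_cycleMoves) n _ (Or.inl rfl) (by simp)
end
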